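/- arXiv:2301.09736 — 5 statements merged into one kernel-verified Lean document; each statement's English description precedes it below -/
import Mathlib

section
/- Let 0<δ<1 and δ'>1 with δ'(1-δ)<1, and set k_n = ⌊n^{δ'}⌋. Then there exists M ≥ 1 such that the interval [M,∞) is contained in the union over n ≥ 1 of the intervals [k_n - k_n^δ, k_n + k_n^δ]. -/
open Filter

/-!
Every `x ≥ 1` lies between `n ^ δ'` and `(n + 1) ^ δ'` for `n = ⌊x ^ (1 / δ')⌋₊`. By the mean value
theorem consecutive values differ by `O(n ^ (δ' - 1))`, while the admissible error `k n ^ δ` is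
of order `n ^ (δ' * δ)`; the hypothesis `δ' * (1 - δ) < 1` says exactly that the second exponent
is the larger one, so for large `n` the interval around `k n` reaches past `(n + 1) ^ δ'`.
-/

lemma Real.rpow_add_one_sub_rpow_le {p : ℝ} (hp : 1 ≤ p) {a : ℝ} (ha : 0 ≤ a) :
    (a + 1) ^ p - a ^ p ≤ p * (a + 1) ^ (p - 1) := by
  obtain ⟨c, ⟨hac, hca⟩, hslope⟩ := exists_hasDerivAt_eq_slope (fun x : ℝ => x ^ p)
    (fun x : ℝ => p * x ^ (p - 1)) (lt_add_one a)
    (fun _ _ => (Real.hasDerivAt_rpow_const (Or.inr hp)).continuousAt.continuousWithinAt)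
    (fun _ _ => Real.hasDerivAt_rpow_const (Or.inr hp))
  have hdiff : (a + 1) ^ p - a ^ p = p * c ^ (p - 1) := by
    rw [hslope]; ring
  rw [hdiff]
  gcongr
  linarith

lemma eventually_mul_rpow_le_mul_rpow {a b : ℝ} (hab : b < a) (C : ℝ) {D : ℝ} (hD : 0 < D) :
    ∀ᶠ x : ℝ in atTop, C * x ^ b ≤ D * x ^ a := by
  filter_upwards [(tendsto_rpow_atTop (sub_pos.2 hab)).eventually_ge_atTop (C / D),
    eventually_gt_atTop 0] with x hCD hx
  have hsplit : x ^ a = x ^ (a - b) * x ^ b := by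
    rw [← Real.rpow_add hx, sub_add_cancel]
  rw [hsplit, ← mul_assoc]
  gcongr
  rwa [← div_le_iff₀' hD]

lemma eventually_rpow_add_one_le_add_rpow {p q : ℝ} (hp : 1 ≤ p) (hpq : p - 1 < p * q) :
    ∀ᶠ x : ℝ in atTop, ∀ y : ℝ, x ^ p - 1 ≤ y → (x + 1) ^ p ≤ y + y ^ q := by
  have hq : 0 < q := by
    by_contra! hq
    nlinarith
  filter_upwards [(tendsto_rpow_atTop (by linarith : (0 : ℝ) < p)).eventually_ge_atTop 2,
    eventually_mul_rpow_le_mul_rpow hpq (p * 2 ^ (p - 1) + 1) (by positivity : (0 : ℝ) < 2 ^ (-q)),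
    eventually_ge_atTop 1] with x hx2 hgrowth hx1 y hy
  have hmvt : (x + 1) ^ p - x ^ p ≤ p * 2 ^ (p - 1) * x ^ (p - 1) := by
    calc (x + 1) ^ p - x ^ p ≤ p * (x + 1) ^ (p - 1) := Real.rpow_add_one_sub_rpow_le hp (by linarith)
      _ ≤ p * (2 * x) ^ (p - 1) := by gcongr; linarith
      _ = p * 2 ^ (p - 1) * x ^ (p - 1) := by rw [Real.mul_rpow (by norm_num) (by linarith)]; ring
  have hone : 1 ≤ x ^ (p - 1) := Real.one_le_rpow hx1 (by linarith)
  have hhalf : 2 ^ (-q) * x ^ (p * q) ≤ y ^ q := by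
    calc 2 ^ (-q) * x ^ (p * q) = (x ^ p / 2) ^ q := by
          rw [Real.div_rpow (by positivity) (by norm_num), ← Real.rpow_mul (by linarith),
            Real.rpow_neg (by norm_num)]
          ring
      _ ≤ y ^ q := by gcongr; linarith
  nlinarith

lemma exists_nat_rpow_le_le_rpow_add_one {p : ℝ} (hp : 0 < p) (N : ℕ) {x : ℝ}
    (hx : (N : ℝ) ^ p ≤ x) : ∃ n ≥ N, (n : ℝ) ^ p ≤ x ∧ x ≤ ((n : ℝ) + 1) ^ p := by
  have hx0 : 0 ≤ x := le_trans (by positivity) hx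
  have hroot : ∀ y : ℝ, 0 ≤ y → (y ≤ x ^ p⁻¹ ↔ y ^ p ≤ x) := fun y hy => by
    rw [← Real.rpow_le_rpow_iff hy (by positivity) hp, Real.rpow_inv_rpow hx0 hp.ne']
  refine ⟨⌊x ^ p⁻¹⌋₊, Nat.le_floor ((hroot N N.cast_nonneg).2 hx), ?_, ?_⟩
  · exact (hroot _ (Nat.cast_nonneg _)).1 (Nat.floor_le (by positivity))
  · conv_lhs => rw [← Real.rpow_inv_rpow hx0 hp.ne']
    gcongr
    exact (Nat.lt_floor_add_one (x ^ p⁻¹)).le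

theorem stmt_0_general (δ δ' : ℝ) (hδ' : 1 < δ')
    (h : δ' * (1 - δ) < 1) (k : ℕ → ℝ) (hk : ∀ n : ℕ, k n = ⌊(n : ℝ) ^ δ'⌋) :
    ∃ M : ℝ, 1 ≤ M ∧
      Set.Ici M ⊆ ⋃ n : ℕ, ⋃ _ : 1 ≤ n, Set.Icc (k n - (k n) ^ δ) (k n + (k n) ^ δ) := by
  obtain ⟨N, hN⟩ := eventually_atTop.1 <| tendsto_natCast_atTop_atTop.eventually <|
    eventually_rpow_add_one_le_add_rpow (p := δ') (q := δ) hδ'.le (by linarith)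
  refine ⟨((N + 1 : ℕ) : ℝ) ^ δ', Real.one_le_rpow (by simp) (by linarith), fun x hx => ?_⟩
  obtain ⟨n, hNn, hnx, hxn⟩ := exists_nat_rpow_le_le_rpow_add_one (by linarith) (N + 1) hx
  have hk0 : 0 ≤ k n := by rw [hk]; exact_mod_cast Int.floor_nonneg.2 (by positivity)
  have hk_le : k n ≤ (n : ℝ) ^ δ' := by rw [hk]; exact Int.floor_le _
  have hk_ge : (n : ℝ) ^ δ' - 1 ≤ k n := by rw [hk]; exact (Int.sub_one_lt_floor _).le
  refine Set.mem_iUnion₂.2 ⟨n, by omega, ?_, ?_⟩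
  · linarith [Real.rpow_nonneg hk0 δ]
  · exact hxn.trans (hN n (by omega) (k n) hk_ge)

/-- For `0<δ<1`, `δ'>1` with `δ'*(1-δ)<1` and `k n = ⌊n^δ'⌋`, there is `M ≥ 1`
such that `[M,∞) ⊆ ⋃_{n ≥ 1} [k n - (k n)^δ, k n + (k n)^δ]`. -/
theorem stmt_0 (δ δ' : ℝ) (hδ0 : 0 < δ) (hδ1 : δ < 1) (hδ' : 1 < δ')
    (h : δ' * (1 - δ) < 1) (k : ℕ → ℝ) (hk : ∀ n : ℕ, k n = ⌊(n : ℝ) ^ δ'⌋) :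
    ∃ M : ℝ, 1 ≤ M ∧
      Set.Ici M ⊆ ⋃ n : ℕ, ⋃ _ : 1 ≤ n, Set.Icc (k n - (k n) ^ δ) (k n + (k n) ^ δ) :=
  stmt_0_general δ δ' hδ' h k hk
end

section
/- Let (Ω, ℙ) be a probability space, E_l: Ω → [0,∞) nonnegative random variables, μ_l: Ω → (0,1) positive random variables such that μ_l·E_l converges in distribution to a nonnegative random variable E with ℙ(E = 0) = 0. Let N_l: Ω → [0,∞) satisfy μ_l·N_l → 0 pointwise almost everywhere. Then ℙ(E_l ≤ N_l) → 0 as l → ∞. -/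
open MeasureTheory Filter Topology

/-- Convergence in distribution of real random variables, via bounded continuous test
functions. -/
def ConvInDist {Ω : Type*} [MeasurableSpace Ω] (P : Measure Ω)
    (X : ℕ → Ω → ℝ) (Y : Ω → ℝ) : Prop :=
  ∀ g : BoundedContinuousFunction ℝ ℝ,
    Tendsto (fun l => ∫ ω, g (X l ω) ∂P) atTop (𝓝 (∫ ω, g (Y ω) ∂P))

/-!
Since `μ_l > 0`, the event `E_l ≤ N_l` is `μ_l E_l - μ_l N_l ≤ 0`. Almost sure convergence
`μ_l N_l → 0` gives convergence in probability, so by Slutsky `μ_l E_l - μ_l N_l` converges in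
distribution to `E`, and the portmanteau theorem for the closed set `(-∞, 0]` bounds
`limsup ℙ(E_l ≤ N_l)` by `ℙ(E ≤ 0) = 0`.
-/

section

variable {Ω : Type*} [MeasurableSpace Ω] {P : Measure Ω} [IsProbabilityMeasure P]

theorem ConvInDist.tendstoInDistribution {X : ℕ → Ω → ℝ} {Y : Ω → ℝ}
    (hX : ∀ l, AEMeasurable (X l) P) (hY : AEMeasurable Y P) (h : ConvInDist P X Y) :
    TendstoInDistribution X atTop Y (fun _ ↦ P) P where
  forall_aemeasurable := hX
  aemeasurable_limit := hY
  tendsto := by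
    refine ProbabilityMeasure.tendsto_iff_forall_integral_tendsto.2 fun g ↦ ?_
    simp only [ProbabilityMeasure.coe_mk]
    rw [integral_map hY g.continuous.aestronglyMeasurable]
    simp_rw [integral_map (hX _) g.continuous.aestronglyMeasurable]
    exact h g

theorem MeasureTheory.TendstoInDistribution.limsup_measure_preimage_le {ι : Type*} {L : Filter ι}
    {X : ι → Ω → ℝ} {Y : Ω → ℝ} (h : TendstoInDistribution X L Y (fun _ ↦ P) P)
    {F : Set ℝ} (hF : IsClosed F) :
    L.limsup (fun i ↦ P (X i ⁻¹' F)) ≤ P (Y ⁻¹' F) := by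
  have := ProbabilityMeasure.limsup_measure_closed_le_of_tendsto h.tendsto hF
  simp only [ProbabilityMeasure.coe_mk] at this
  simpa only [Measure.map_apply_of_aemeasurable (h.forall_aemeasurable _) hF.measurableSet,
    Measure.map_apply_of_aemeasurable h.aemeasurable_limit hF.measurableSet] using this

theorem MeasureTheory.TendstoInDistribution.tendsto_measure_preimage_of_null {ι : Type*}
    {L : Filter ι} {X : ι → Ω → ℝ} {Y : Ω → ℝ} (h : TendstoInDistribution X L Y (fun _ ↦ P) P)
    {F : Set ℝ} (hF : IsClosed F) (hYF : P (Y ⁻¹' F) = 0) :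
    Tendsto (fun i ↦ P (X i ⁻¹' F)) L (𝓝 0) :=
  tendsto_of_le_liminf_of_limsup_le bot_le (hYF ▸ h.limsup_measure_preimage_le hF)

end

theorem stmt_6_general {Ω : Type*} [MeasurableSpace Ω] (P : Measure Ω) [IsProbabilityMeasure P]
    (E : ℕ → Ω → ℝ) (hEmeas : ∀ l, Measurable (E l))
    (μl : ℕ → Ω → ℝ) (hμmeas : ∀ l, Measurable (μl l))
    (hμ : ∀ l ω, 0 < μl l ω ∧ μl l ω < 1)
    (Elim : Ω → ℝ) (hElimmeas : Measurable Elim) (hElim : ∀ ω, 0 ≤ Elim ω)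
    (h0 : P {ω | Elim ω = 0} = 0)
    (hconv : ConvInDist P (fun l ω => μl l ω * E l ω) Elim)
    (N : ℕ → Ω → ℝ) (hNmeas : ∀ l, Measurable (N l))
    (hNlim : ∀ᵐ ω ∂P, Tendsto (fun l => μl l ω * N l ω) atTop (𝓝 0)) :
    Tendsto (fun l => P {ω | E l ω ≤ N l ω}) atTop (𝓝 0) := by
  have hμE : ∀ l, Measurable fun ω ↦ μl l ω * E l ω := fun l ↦ (hμmeas l).mul (hEmeas l)
  have hμN : ∀ l, Measurable fun ω ↦ -(μl l ω * N l ω) := fun l ↦ ((hμmeas l).mul (hNmeas l)).neg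
  have hμN_lim : TendstoInMeasure P (fun l ω ↦ -(μl l ω * N l ω)) atTop fun _ ↦ 0 :=
    tendstoInMeasure_of_tendsto_ae (fun l ↦ (hμN l).aestronglyMeasurable)
      (hNlim.mono fun ω h ↦ by simpa using h.neg)
  have hdiff := (hconv.tendstoInDistribution (fun l ↦ (hμE l).aemeasurable)
    hElimmeas.aemeasurable).add_of_tendstoInMeasure_const hμN_lim fun l ↦ (hμN l).aemeasurable
  have hset : ∀ l, {ω | E l ω ≤ N l ω} =
      ((fun ω ↦ μl l ω * E l ω) + fun ω ↦ -(μl l ω * N l ω)) ⁻¹' Set.Iic 0 := fun l ↦ by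
    ext ω
    simp only [Set.mem_ofPred_eq, Set.mem_preimage, Set.mem_Iic, Pi.add_apply]
    rw [← sub_eq_add_neg, sub_nonpos, mul_le_mul_iff_right₀ (hμ l ω).1]
  have hElim_nonpos : P ((fun ω ↦ Elim ω + 0) ⁻¹' Set.Iic 0) = 0 :=
    measure_mono_null (fun ω hω ↦ le_antisymm (by simpa using hω) (hElim ω)) h0
  simpa only [hset] using hdiff.tendsto_measure_preimage_of_null isClosed_Iic hElim_nonpos

/-- if `μ_l E_l ⇒ E` with `P(E=0)=0` and `μ_l N_l → 0` a.e., then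
`P(E_l ≤ N_l) → 0`. -/
theorem stmt_6 {Ω : Type*} [MeasurableSpace Ω] (P : Measure Ω) [IsProbabilityMeasure P]
    (E : ℕ → Ω → ℝ) (hEmeas : ∀ l, Measurable (E l)) (hE : ∀ l ω, 0 ≤ E l ω)
    (μl : ℕ → Ω → ℝ) (hμmeas : ∀ l, Measurable (μl l))
    (hμ : ∀ l ω, 0 < μl l ω ∧ μl l ω < 1)
    (Elim : Ω → ℝ) (hElimmeas : Measurable Elim) (hElim : ∀ ω, 0 ≤ Elim ω)
    (h0 : P {ω | Elim ω = 0} = 0)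
    (hconv : ConvInDist P (fun l ω => μl l ω * E l ω) Elim)
    (N : ℕ → Ω → ℝ) (hNmeas : ∀ l, Measurable (N l)) (hN : ∀ l ω, 0 ≤ N l ω)
    (hNlim : ∀ᵐ ω ∂P, Tendsto (fun l => μl l ω * N l ω) atTop (𝓝 0)) :
    Tendsto (fun l => P {ω | E l ω ≤ N l ω}) atTop (𝓝 0) :=
  stmt_6_general P E hEmeas μl hμmeas hμ Elim hElimmeas hElim h0 hconv N hNmeas hNlim
end

section
/- Let α ∈ 𝕋^{d'} satisfy the Diophantine condition |⟨k,α⟩ − l| > C|k|^{-n} for all nonzero k ∈ ℤ^{d'}, l ∈ ℤ. Then for every f in the Sobolev space H^n(𝕋^{d'}) with ∫ f dλ = 0 there exists g ∈ L^2(𝕋^{d'}) solving the cohomological equation f = g − g∘R_α, with ‖g‖_{L^2} ≤ C'‖f‖_{H^n} for a constant C' depending only on C, n, d'. Consequently, for every h ∈ H^n(𝕋^{d'}) and every J ≥ 1, ‖∑_{j=1}^J h∘R_α^j − J∫h dλ‖_{L^2} ≤ C''‖h‖_{H^n}. -/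
/-!
On the Fourier side the cohomological equation reads `a k = (1 - e(⟨k, α⟩)) b k`, so
`b k = a k / (1 - e(⟨k, α⟩))`. The small divisor is controlled by
`|1 - e(θ)| = 2 |sin πθ| ≥ 4 ‖θ‖_{ℝ/ℤ}` (Jordan's inequality), which the Diophantine condition
bounds below by `4C |k|_∞^{-n} ≥ 4C (1 + |k|²)^{-n/2}`. Hence `|b k|² ≤ (4C)⁻² (1 + |k|²)^n |a k|²`.
For the ergodic sums, `(1 - z) ∑_{j=1}^J z^j = z - z^{J+1}` has modulus at most `2` when `|z| = 1`,
which gives the same bound with an extra factor `2`.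
-/

open scoped Real

open Complex Finset

lemma four_mul_abs_sub_round_le_norm_one_sub_exp (θ : ℝ) :
    4 * |θ - round θ| ≤ ‖1 - exp (2 * π * I * θ)‖ := by
  set t := θ - round θ
  have hshift : 2 * π * I * θ = I * ↑(2 * π * t) + (round θ : ℤ) * (2 * π * I) := by
    push_cast [t]; ring
  have hsin : 2 / π * |π * t| ≤ |Real.sin (π * t)| :=
    Real.mul_abs_le_abs_sin <| by
      rw [abs_mul, abs_of_pos Real.pi_pos]
      nlinarith [abs_sub_round θ, Real.pi_pos]
  rw [hshift, exp_add, exp_int_mul_two_pi_mul_I, mul_one, norm_sub_rev,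
    norm_exp_I_mul_ofReal_sub_one, Real.norm_eq_abs, abs_mul, abs_two,
    show 2 * π * t / 2 = π * t by ring]
  rw [abs_mul, abs_of_pos Real.pi_pos] at hsin
  field_simp at hsin
  linarith

lemma four_mul_le_pow_mul_norm_one_sub_exp {C θ : ℝ} {M n : ℕ} (hM : 0 < M)
    (hθ : C * (M : ℝ) ^ (-(n : ℝ)) < |θ - round θ|) :
    4 * C ≤ (M : ℝ) ^ n * ‖1 - exp (2 * π * I * θ)‖ := by
  have hMn : (0 : ℝ) < (M : ℝ) ^ n := by positivity
  rw [Real.rpow_neg (Nat.cast_nonneg M), Real.rpow_natCast, ← div_eq_mul_inv,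
    div_lt_iff₀ hMn] at hθ
  nlinarith [four_mul_abs_sub_round_le_norm_one_sub_exp θ]

lemma sq_sup_natAbs_le_sum_sq {ι : Type*} [Fintype ι] (k : ι → ℤ) :
    ((univ.sup fun i => (k i).natAbs : ℕ) : ℝ) ^ 2 ≤ ∑ i, (k i : ℝ) ^ 2 := by
  rcases (univ : Finset ι).eq_empty_or_nonempty with hempty | hne
  · simp [hempty]
  obtain ⟨i, -, hi⟩ := exists_mem_eq_sup univ hne fun i => (k i).natAbs
  rw [hi, Nat.cast_natAbs, Int.cast_abs, sq_abs]
  exact single_le_sum (f := fun i => (k i : ℝ) ^ 2) (fun i _ => sq_nonneg _) (mem_univ i)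

lemma sup_natAbs_pos {ι : Type*} [Fintype ι] {k : ι → ℤ} (hk : k ≠ 0) :
    0 < univ.sup fun i => (k i).natAbs := by
  obtain ⟨i, hi⟩ := Function.ne_iff.mp hk
  exact (Int.natAbs_pos.mpr hi).trans_le (le_sup (f := fun i => (k i).natAbs) (mem_univ i))

lemma sq_le_one_add_sum_sq_pow_mul_sq_norm_one_sub_exp {ι : Type*} [Fintype ι]
    {C θ : ℝ} (hC : 0 ≤ C) {n : ℕ} {k : ι → ℤ} (hk : k ≠ 0)
    (hθ : C * ((univ.sup fun i => (k i).natAbs : ℕ) : ℝ) ^ (-(n : ℝ)) < |θ - round θ|) :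
    (4 * C) ^ 2 ≤ (1 + ∑ i, (k i : ℝ) ^ 2) ^ n * ‖1 - exp (2 * π * I * θ)‖ ^ 2 := by
  set M : ℕ := univ.sup fun i => (k i).natAbs
  have hpow : ((M : ℝ) ^ n) ^ 2 ≤ (1 + ∑ i, (k i : ℝ) ^ 2) ^ n := by
    rw [← pow_mul, mul_comm, pow_mul]
    exact pow_le_pow_left₀ (sq_nonneg _) (by linarith [sq_sup_natAbs_le_sum_sq k]) n
  calc (4 * C) ^ 2 ≤ ((M : ℝ) ^ n * ‖1 - exp (2 * π * I * θ)‖) ^ 2 :=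
        pow_le_pow_left₀ (by positivity)
          (four_mul_le_pow_mul_norm_one_sub_exp (sup_natAbs_pos hk) hθ) 2
    _ = ((M : ℝ) ^ n) ^ 2 * ‖1 - exp (2 * π * I * θ)‖ ^ 2 := mul_pow _ _ _
    _ ≤ _ := by gcongr

lemma norm_one_sub_mul_norm_geom_sum_Icc_le {R : Type*} [NormedRing R] [NormMulClass R]
    [NormOneClass R] {z : R} (hz : ‖z‖ ≤ 1) (J : ℕ) :
    ‖1 - z‖ * ‖∑ j ∈ Icc 1 J, z ^ j‖ ≤ 2 := by
  rw [mul_comm, ← norm_mul, ← Ico_add_one_right_eq_Icc, geom_sum_Ico_mul_neg _ (by omega)]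
  calc ‖z ^ 1 - z ^ (J + 1)‖ ≤ ‖z ^ 1‖ + ‖z ^ (J + 1)‖ := norm_sub_le _ _
    _ ≤ 1 + 1 := by
        gcongr <;> rw [norm_pow] <;> exact pow_le_one₀ (norm_nonneg z) hz
    _ = 2 := one_add_one_eq_two

lemma sq_norm_mul_le_of_sq_le_mul_sq_norm {R : Type*} [NormedRing R] [NormMulClass R]
    {x u S : R} {δ w K : ℝ} (hδ : 0 < δ) (hu : δ ^ 2 ≤ w * ‖u‖ ^ 2) (hS : ‖u‖ * ‖S‖ ≤ K) :
    ‖x * S‖ ^ 2 ≤ (K / δ) ^ 2 * (‖x‖ ^ 2 * w) := by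
  have hw : 0 ≤ w := by
    by_contra! hw
    nlinarith [mul_nonpos_of_nonpos_of_nonneg hw.le (sq_nonneg ‖u‖), sq_pos_of_pos hδ]
  have hSδ : ‖S‖ ^ 2 * δ ^ 2 ≤ K ^ 2 * w :=
    calc ‖S‖ ^ 2 * δ ^ 2 ≤ ‖S‖ ^ 2 * (w * ‖u‖ ^ 2) := by gcongr
      _ = (‖u‖ * ‖S‖) ^ 2 * w := by ring
      _ ≤ K ^ 2 * w := by gcongr
  have hS2 : ‖S‖ ^ 2 ≤ (K / δ) ^ 2 * w := by
    rwa [div_pow, div_mul_eq_mul_div, le_div_iff₀ (by positivity)]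
  calc ‖x * S‖ ^ 2 = ‖x‖ ^ 2 * ‖S‖ ^ 2 := by rw [norm_mul, mul_pow]
    _ ≤ ‖x‖ ^ 2 * ((K / δ) ^ 2 * w) := by gcongr
    _ = (K / δ) ^ 2 * (‖x‖ ^ 2 * w) := by ring

lemma summable_and_tsum_le_mul_tsum {ι : Type*} {f g : ι → ℝ} {c : ℝ} (hf : ∀ i, 0 ≤ f i)
    (hfg : ∀ i, f i ≤ c * g i) (hg : Summable g) :
    Summable f ∧ ∑' i, f i ≤ c * ∑' i, g i := by
  have hf_summable : Summable f := hg.mul_left c |>.of_nonneg_of_le hf hfg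
  exact ⟨hf_summable, (hf_summable.tsum_le_tsum hfg (hg.mul_left c)).trans_eq tsum_mul_left⟩

section SmallDivisors

variable {κ : Type*} [Zero κ] [DecidableEq κ] {z : κ → ℂ} {w : κ → ℝ} {δ : ℝ}

lemma exists_eq_sub_mul_self_and_tsum_sq_norm_le (hδ : 0 < δ)
    (hsmall : ∀ k ≠ 0, δ ^ 2 ≤ w k * ‖1 - z k‖ ^ 2) {a : κ → ℂ} (ha0 : a 0 = 0)
    (ha : Summable fun k => ‖a k‖ ^ 2 * w k) :
    ∃ b : κ → ℂ, b 0 = 0 ∧ (∀ k, a k = b k - z k * b k) ∧ Summable (fun k => ‖b k‖ ^ 2) ∧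
      ∑' k, ‖b k‖ ^ 2 ≤ (1 / δ) ^ 2 * ∑' k, ‖a k‖ ^ 2 * w k := by
  have hz : ∀ k ≠ 0, 1 - z k ≠ 0 := fun k hk h0 => by
    have := hsmall k hk
    rw [h0, norm_zero] at this
    nlinarith
  set b : κ → ℂ := fun k => if k = 0 then 0 else a k * (1 - z k)⁻¹
  have hb : ∀ k, ‖b k‖ ^ 2 ≤ (1 / δ) ^ 2 * (‖a k‖ ^ 2 * w k) := by
    intro k
    by_cases hk : k = 0
    · simp [b, hk, ha0]
    · simp only [b, if_neg hk]
      refine sq_norm_mul_le_of_sq_le_mul_sq_norm hδ (hsmall k hk) ?_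
      rw [norm_inv, mul_inv_cancel₀ (norm_ne_zero_iff.mpr (hz k hk))]
  obtain ⟨hb_summable, hb_tsum⟩ := summable_and_tsum_le_mul_tsum (fun k => sq_nonneg _) hb ha
  refine ⟨b, if_pos rfl, fun k => ?_, hb_summable, hb_tsum⟩
  by_cases hk : k = 0
  · simp [b, hk, ha0]
  · simp only [b, if_neg hk]
    rw [← one_sub_mul, mul_comm, mul_assoc, inv_mul_cancel₀ (hz k hk), mul_one]

lemma tsum_sq_norm_mul_geom_sum_le (hδ : 0 < δ)
    (hsmall : ∀ k ≠ 0, δ ^ 2 ≤ w k * ‖1 - z k‖ ^ 2) (hz : ∀ k, ‖z k‖ ≤ 1) (hw0 : 0 ≤ w 0)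
    {a : κ → ℂ} (ha : Summable fun k => ‖a k‖ ^ 2 * w k) (J : ℕ) :
    ∑' k, (if k = 0 then 0 else ‖a k * ∑ j ∈ Icc 1 J, z k ^ j‖ ^ 2)
      ≤ (2 / δ) ^ 2 * ∑' k, ‖a k‖ ^ 2 * w k := by
  have hterm : ∀ k, (if k = 0 then 0 else ‖a k * ∑ j ∈ Icc 1 J, z k ^ j‖ ^ 2)
      ≤ (2 / δ) ^ 2 * (‖a k‖ ^ 2 * w k) := by
    intro k
    by_cases hk : k = 0
    · rw [if_pos hk, hk]
      positivity
    · rw [if_neg hk]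
      exact sq_norm_mul_le_of_sq_le_mul_sq_norm hδ (hsmall k hk)
        (norm_one_sub_mul_norm_geom_sum_Icc_le (hz k) J)
  exact (summable_and_tsum_le_mul_tsum (fun _ => ite_nonneg le_rfl (sq_nonneg _)) hterm ha).2

end SmallDivisors

/-- An `H^n` function on `𝕋^{d'}` is represented by its Fourier coefficients
`a : ℤ^{d'} → ℂ` with `∑_k |a_k|²(1+|k|²)^n < ∞`; composition with `R_α` multiplies the
`k`-th coefficient by `e^{2πi⟨k,α⟩}`.  Mean zero corresponds to `a 0 = 0`, and
`‖∑_{j=1}^J h∘R_α^j − J∫h‖²_{L²}` is the tsum in the second clause (Parseval). -/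
theorem stmt_11_general (d' : ℕ) (α : Fin d' → ℝ)
    (C : ℝ) (hC : 0 < C) (n : ℕ)
    (hdio : ∀ k : Fin d' → ℤ, k ≠ 0 → ∀ l : ℤ,
      C * (((Finset.univ.sup fun i => (k i).natAbs : ℕ) : ℝ)) ^ (-(n : ℝ))
        < |(∑ i, (k i : ℝ) * α i) - (l : ℝ)|) :
    ∃ C' > (0 : ℝ), ∃ C'' > (0 : ℝ),
      (∀ a : (Fin d' → ℤ) → ℂ, a 0 = 0 →
        Summable (fun k : Fin d' → ℤ =>
          ‖a k‖ ^ 2 * (1 + ∑ i, ((k i : ℝ)) ^ 2) ^ n) →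
        ∃ b : (Fin d' → ℤ) → ℂ, b 0 = 0 ∧
          (∀ k, a k
            = b k - Complex.exp (2 * (π : ℂ) * Complex.I * ((∑ i, (k i : ℝ) * α i : ℝ) : ℂ)) * b k) ∧
          Summable (fun k : Fin d' → ℤ => ‖b k‖ ^ 2) ∧
          (∑' k : Fin d' → ℤ, ‖b k‖ ^ 2)
            ≤ C' ^ 2 * ∑' k : Fin d' → ℤ, ‖a k‖ ^ 2 * (1 + ∑ i, ((k i : ℝ)) ^ 2) ^ n) ∧
      (∀ a : (Fin d' → ℤ) → ℂ,
        Summable (fun k : Fin d' → ℤ =>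
          ‖a k‖ ^ 2 * (1 + ∑ i, ((k i : ℝ)) ^ 2) ^ n) →
        ∀ J : ℕ, 1 ≤ J →
          (∑' k : Fin d' → ℤ, (if k = 0 then (0 : ℝ) else
            ‖a k * ∑ j ∈ Finset.Icc 1 J,
              Complex.exp (2 * (π : ℂ) * Complex.I * (j : ℂ)
                * ((∑ i, (k i : ℝ) * α i : ℝ) : ℂ))‖ ^ 2))
            ≤ C'' ^ 2 * ∑' k : Fin d' → ℤ, ‖a k‖ ^ 2 * (1 + ∑ i, ((k i : ℝ)) ^ 2) ^ n) := by
  set z : (Fin d' → ℤ) → ℂ := fun k => exp (2 * π * I * ↑(∑ i, (k i : ℝ) * α i))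
  have hsmall : ∀ k ≠ 0, (4 * C) ^ 2 ≤ (1 + ∑ i, (k i : ℝ) ^ 2) ^ n * ‖1 - z k‖ ^ 2 :=
    fun k hk => sq_le_one_add_sum_sq_pow_mul_sq_norm_one_sub_exp hC.le hk (hdio k hk _)
  have hz : ∀ k, ‖z k‖ ≤ 1 := fun k => by simp [z, norm_exp]
  have hgeom : ∀ (k : Fin d' → ℤ) (j : ℕ),
      exp (2 * π * I * j * ↑(∑ i, (k i : ℝ) * α i)) = z k ^ j := fun k j => by
    rw [← exp_nat_mul]; ring_nf
  have h4C : 0 < 4 * C := by positivity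
  refine ⟨1 / (4 * C), by positivity, 2 / (4 * C), by positivity,
    fun a ha0 ha => exists_eq_sub_mul_self_and_tsum_sq_norm_le h4C hsmall ha0 ha,
    fun a ha J _ => ?_⟩
  simp_rw [hgeom]
  exact tsum_sq_norm_mul_geom_sum_le h4C hsmall hz (by positivity) ha J

/-- solving the cohomological equation for a Diophantine rotation, stated on
the Fourier side.  An `H^n` function on `𝕋^{d'}` is represented by its Fourier coefficients
`a : ℤ^{d'} → ℂ` with `∑_k |a_k|²(1+|k|²)^n < ∞`; composition with `R_α` multiplies the
`k`-th coefficient by `e^{2πi⟨k,α⟩}`.  Mean zero corresponds to `a 0 = 0`, and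
`‖∑_{j=1}^J h∘R_α^j − J∫h‖²_{L²}` is the tsum in the second clause (Parseval). -/
theorem stmt_11 (d' : ℕ) (hd' : 1 ≤ d') (α : Fin d' → ℝ)
    (C : ℝ) (hC : 0 < C) (n : ℕ) (hn : 1 ≤ n)
    (hdio : ∀ k : Fin d' → ℤ, k ≠ 0 → ∀ l : ℤ,
      C * (((Finset.univ.sup fun i => (k i).natAbs : ℕ) : ℝ)) ^ (-(n : ℝ))
        < |(∑ i, (k i : ℝ) * α i) - (l : ℝ)|) :
    ∃ C' > (0 : ℝ), ∃ C'' > (0 : ℝ),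
      (∀ a : (Fin d' → ℤ) → ℂ, a 0 = 0 →
        Summable (fun k : Fin d' → ℤ =>
          ‖a k‖ ^ 2 * (1 + ∑ i, ((k i : ℝ)) ^ 2) ^ n) →
        ∃ b : (Fin d' → ℤ) → ℂ, b 0 = 0 ∧
          (∀ k, a k
            = b k - Complex.exp (2 * (π : ℂ) * Complex.I * ((∑ i, (k i : ℝ) * α i : ℝ) : ℂ)) * b k) ∧
          Summable (fun k : Fin d' → ℤ => ‖b k‖ ^ 2) ∧
          (∑' k : Fin d' → ℤ, ‖b k‖ ^ 2)
            ≤ C' ^ 2 * ∑' k : Fin d' → ℤ, ‖a k‖ ^ 2 * (1 + ∑ i, ((k i : ℝ)) ^ 2) ^ n) ∧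
      (∀ a : (Fin d' → ℤ) → ℂ,
        Summable (fun k : Fin d' → ℤ =>
          ‖a k‖ ^ 2 * (1 + ∑ i, ((k i : ℝ)) ^ 2) ^ n) →
        ∀ J : ℕ, 1 ≤ J →
          (∑' k : Fin d' → ℤ, (if k = 0 then (0 : ℝ) else
            ‖a k * ∑ j ∈ Finset.Icc 1 J,
              Complex.exp (2 * (π : ℂ) * Complex.I * (j : ℂ)
                * ((∑ i, (k i : ℝ) * α i : ℝ) : ℂ))‖ ^ 2))
            ≤ C'' ^ 2 * ∑' k : Fin d' → ℤ, ‖a k‖ ^ 2 * (1 + ∑ i, ((k i : ℝ)) ^ 2) ^ n) :=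
  stmt_11_general d' α C hC n hdio
end

section
/- Let (Y,R,ν) be a probability-preserving system and (B_l) a sequence of measurable sets with ν(B_l) > 0. Suppose that for a.e. y ∈ Y, for all l ≥ L_y and n ≥ M_y M_l, |∑_{j=1}^n 1_{B_l}(R^j y) − nν(B_l)| ≤ C_{l,y}·n^{1−(1−δ)/(r+1)} for constants δ ∈ (0,1), M_y, M_l, C_{l,y}, L_y. Define N_l(y) = max(M_l, ⌈1/(2ν(B_l))⌉, min{n ≥ 1 : n^{−(1−δ)/(r+1)} ≤ ν(B_l)/(2C_{l,y})}). Then for such y and all s ≥ M_y, |(ν(B_l)/(sN_l(y)))·∑_{j=0}^{⌈sN_l(y)⌉−1} φ_{B_l}(R_{B_l}^j y) − 1| ≤ 3s^{−(1−δ)/(r+1)} + 2/s, where φ_{B_l} is the first return time to B_l and R_{B_l} the first return map. -/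
/-!
Write `S_m = φ(y) + φ(R_B y) + ⋯ + φ(R_B^{m-1} y)`. The orbit of `y` enters `B` exactly at the
times `S_1 < S_2 < ⋯`, so the counting estimate at `n = S_m` reads `|m - S_m ν(B)| ≤ C S_m^{1-γ}`.
Take `m = ⌈sN⌉`. Since `S_m ≥ m ≥ sN` and `N` was chosen with `C N^{-γ} ≤ ν(B)/2`, the error is
at most `s^{-γ} ν(B) S_m / 2`; this first gives `ν(B) S_m ≤ 2m ≤ 4sN`, and then
`|ν(B) S_m - m| ≤ 2 s^{-γ} sN`. Dividing by `sN` and using `0 ≤ m - sN < 1` gives the bound.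
-/

open MeasureTheory Finset Filter

theorem exists_natCast_rpow_neg_le {γ a : ℝ} (hγ : 0 < γ) (ha : 0 < a) :
    {n : ℕ | 1 ≤ n ∧ (n : ℝ) ^ (-γ) ≤ a}.Nonempty := by
  have hlim := (tendsto_rpow_neg_atTop hγ).comp tendsto_natCast_atTop_atTop
  obtain ⟨n, hn1, hna⟩ := ((eventually_ge_atTop 1).and (hlim.eventually (ge_mem_nhds ha))).exists
  exact ⟨n, hn1, hna⟩

theorem natCast_rpow_neg_le_of_sInf_le {γ a : ℝ} (hγ : 0 < γ) (ha : 0 < a) {k : ℕ}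
    (hk : sInf {n : ℕ | 1 ≤ n ∧ (n : ℝ) ^ (-γ) ≤ a} ≤ k) : 1 ≤ k ∧ (k : ℝ) ^ (-γ) ≤ a := by
  obtain ⟨hn1, hna⟩ := Nat.sInf_mem (exists_natCast_rpow_neg_le hγ ha)
  have hn0 : (0 : ℝ) < (sInf {n : ℕ | 1 ≤ n ∧ (n : ℝ) ^ (-γ) ≤ a} : ℕ) := by exact_mod_cast hn1
  exact ⟨hn1.trans hk, (Real.rpow_le_rpow_of_nonpos hn0 (by exact_mod_cast hk)
    (neg_nonpos.2 hγ.le)).trans hna⟩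

theorem mul_rpow_one_sub_le {C γ ν s N S : ℝ} (hC : 0 ≤ C) (hγ : 0 ≤ γ) (hs : 0 < s)
    (hN : 0 < N) (hS : s * N ≤ S) (hCN : C * N ^ (-γ) ≤ ν / 2) :
    C * S ^ (1 - γ) ≤ s ^ (-γ) / 2 * (S * ν) := by
  have hsN : 0 < s * N := mul_pos hs hN
  have hS0 : 0 < S := hsN.trans_le hS
  have hdecay : S ^ (-γ) ≤ s ^ (-γ) * N ^ (-γ) := by
    rw [← Real.mul_rpow hs.le hN.le]
    exact Real.rpow_le_rpow_of_nonpos hsN hS (neg_nonpos.2 hγ)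
  calc C * S ^ (1 - γ) = C * S ^ (-γ) * S := by
        rw [sub_eq_neg_add, Real.rpow_add_one hS0.ne']; ring
    _ ≤ C * (s ^ (-γ) * N ^ (-γ)) * S := by gcongr
    _ = s ^ (-γ) * (C * N ^ (-γ)) * S := by ring
    _ ≤ s ^ (-γ) * (ν / 2) * S := by gcongr
    _ = s ^ (-γ) / 2 * (S * ν) := by ring

theorem abs_div_mul_sub_one_le {x S ν ε : ℝ} (hx : 1 ≤ x) (hSν : 0 ≤ S * ν) (hε0 : 0 ≤ ε)
    (hε1 : ε ≤ 1) (h : |(⌈x⌉₊ : ℝ) - S * ν| ≤ ε / 2 * (S * ν)) :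
    |ν / x * S - 1| ≤ 2 * ε + 1 / x := by
  have hx0 : 0 < x := one_pos.trans_le hx
  have hm : x ≤ ⌈x⌉₊ := Nat.le_ceil x
  have hm' : (⌈x⌉₊ : ℝ) < x + 1 := Nat.ceil_lt_add_one hx0.le
  have hSν : S * ν ≤ 4 * x := by
    have := (abs_le.1 h).1
    nlinarith
  have herr : |(⌈x⌉₊ : ℝ) - S * ν| ≤ 2 * ε * x := by
    calc _ ≤ ε / 2 * (S * ν) := h
      _ ≤ ε / 2 * (4 * x) := by gcongr
      _ = 2 * ε * x := by ring
  have hceil : |(⌈x⌉₊ : ℝ) - x| ≤ 1 := by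
    rw [abs_le]; constructor <;> linarith
  rw [show ν / x * S - 1 = (S * ν - x) / x by field_simp, abs_div, abs_of_pos hx0,
    div_le_iff₀ hx0, add_mul, one_div_mul_cancel hx0.ne']
  calc |S * ν - x| ≤ |S * ν - ⌈x⌉₊| + |(⌈x⌉₊ : ℝ) - x| := abs_sub_le _ _ _
    _ ≤ 2 * ε * x + 1 := by rw [abs_sub_comm]; exact add_le_add herr hceil

theorem sum_Icc_iterate_eq_birkhoffSum {Y M : Type*} [AddCommMonoid M]
    (R : Y → Y) (g : Y → M) (n : ℕ) (y : Y) :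
    ∑ j ∈ Icc 1 n, g (R^[j] y) = birkhoffSum R g n (R y) := by
  rw [birkhoffSum, range_eq_Ico, ← Ico_add_one_right_eq_Icc, ← sum_Ico_add' _ 0 n 1]
  simp [Function.iterate_succ_apply]

namespace Function

variable {Y : Type*} (R : Y → Y) (B : Set Y)

/-- Equal to `0` (as `sInf ∅`) when the orbit of `y` never returns to `B`. -/
noncomputable def firstReturnTime (y : Y) : ℕ := sInf {n | 1 ≤ n ∧ R^[n] y ∈ B}

noncomputable def firstReturnMap (y : Y) : Y := R^[firstReturnTime R B y] y

variable {R B}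

theorem one_le_firstReturnTime {y : Y} (h : ∃ n, 1 ≤ n ∧ R^[n] y ∈ B) :
    1 ≤ firstReturnTime R B y :=
  (Nat.sInf_mem h).1

theorem firstReturnMap_mem {y : Y} (h : ∃ n, 1 ≤ n ∧ R^[n] y ∈ B) :
    firstReturnMap R B y ∈ B :=
  (Nat.sInf_mem h).2

theorem iterate_notMem_of_lt_firstReturnTime {y : Y} {k : ℕ} (hk : 1 ≤ k)
    (hlt : k < firstReturnTime R B y) : R^[k] y ∉ B :=
  fun hmem => Nat.notMem_of_lt_sInf hlt ⟨hk, hmem⟩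

theorem iterate_birkhoffSum_firstReturnTime (y : Y) (m : ℕ) :
    R^[birkhoffSum (firstReturnMap R B) (firstReturnTime R B) m y] y
      = (firstReturnMap R B)^[m] y := by
  induction m with
  | zero => rfl
  | succ m ih =>
    rw [birkhoffSum_succ, add_comm, iterate_add_apply, ih, iterate_succ_apply']
    rfl

theorem le_birkhoffSum_firstReturnTime (hrec : ∀ z, ∃ n, 1 ≤ n ∧ R^[n] z ∈ B) (y : Y) (m : ℕ) :
    m ≤ birkhoffSum (firstReturnMap R B) (firstReturnTime R B) m y := by
  simpa [birkhoffSum] using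
    card_nsmul_le_sum (range m) _ 1 fun k _ => one_le_firstReturnTime (hrec _)

variable {M : Type*} [AddCommMonoidWithOne M]

theorem birkhoffSum_indicator_firstReturnTime {y : Y} (h : ∃ n, 1 ≤ n ∧ R^[n] y ∈ B) :
    birkhoffSum R (B.indicator (1 : Y → M)) (firstReturnTime R B y) (R y) = 1 := by
  obtain ⟨k, hk⟩ := Nat.exists_eq_add_of_le' (one_le_firstReturnTime h)
  have hvisit : R^[k] (R y) ∈ B := by
    simpa [firstReturnMap, hk, iterate_succ_apply] using firstReturnMap_mem h
  have hmiss : birkhoffSum R (B.indicator (1 : Y → M)) k (R y) = 0 :=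
    sum_eq_zero fun j hj => Set.indicator_of_notMem
      (by rw [← iterate_succ_apply]
          exact iterate_notMem_of_lt_firstReturnTime j.succ_pos (by rw [mem_range] at hj; omega)) _
  rw [hk, birkhoffSum_succ, hmiss, Set.indicator_of_mem hvisit, zero_add, Pi.one_apply]

theorem birkhoffSum_indicator_birkhoffSum_firstReturnTime
    (hrec : ∀ z, ∃ n, 1 ≤ n ∧ R^[n] z ∈ B) (y : Y) (m : ℕ) :
    birkhoffSum R (B.indicator (1 : Y → M))
      (birkhoffSum (firstReturnMap R B) (firstReturnTime R B) m y) (R y) = m := by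
  induction m with
  | zero => simp
  | succ m ih =>
    rw [birkhoffSum_succ, birkhoffSum_add, ih, ← iterate_succ_apply, iterate_succ_apply',
      iterate_birkhoffSum_firstReturnTime, birkhoffSum_indicator_firstReturnTime (hrec _),
      Nat.cast_succ]

theorem abs_div_mul_sum_firstReturnTime_sub_one_le (hrec : ∀ z, ∃ n, 1 ≤ n ∧ R^[n] z ∈ B)
    (y : Y) {μ C γ s N M : ℝ} (hμ : 0 < μ) (hC : 0 ≤ C) (hγ : 0 ≤ γ) (hs : 1 ≤ s) (hN : 1 ≤ N)
    (hCN : C * N ^ (-γ) ≤ μ / 2) (hM : M ≤ s * N)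
    (hcount : ∀ n : ℕ, M ≤ n →
      |∑ j ∈ Icc 1 n, B.indicator (fun _ => (1 : ℝ)) (R^[j] y) - n * μ| ≤ C * (n : ℝ) ^ (1 - γ)) :
    |μ / (s * N) * ∑ j ∈ range ⌈s * N⌉₊, (firstReturnTime R B ((firstReturnMap R B)^[j] y) : ℝ)
      - 1| ≤ 2 * s ^ (-γ) + 1 / s := by
  set S := birkhoffSum (firstReturnMap R B) (firstReturnTime R B) ⌈s * N⌉₊ y
  have hsN : 1 ≤ s * N := one_le_mul_of_one_le_of_one_le hs hN
  have hS : s * N ≤ S :=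
    (Nat.le_ceil _).trans (by exact_mod_cast le_birkhoffSum_firstReturnTime hrec y _)
  have hvisits : birkhoffSum R (B.indicator fun _ => (1 : ℝ)) S (R y) = ⌈s * N⌉₊ :=
    birkhoffSum_indicator_birkhoffSum_firstReturnTime hrec y _
  have hcountS := hcount S (hM.trans hS)
  rw [sum_Icc_iterate_eq_birkhoffSum, hvisits] at hcountS
  have hsum : ∑ j ∈ range ⌈s * N⌉₊,
      (firstReturnTime R B ((firstReturnMap R B)^[j] y) : ℝ) = S := by
    simp only [S, birkhoffSum, Nat.cast_sum]
  have hs0 : 0 < s := by linarith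
  calc _ ≤ 2 * s ^ (-γ) + 1 / (s * N) := by
        rw [hsum]
        exact abs_div_mul_sub_one_le hsN (by positivity) (Real.rpow_nonneg hs0.le _)
          (Real.rpow_le_one_of_one_le_of_nonpos hs (neg_nonpos.2 hγ))
          (hcountS.trans (mul_rpow_one_sub_le hC hγ hs0 (by linarith) hS hCN))
    _ ≤ 2 * s ^ (-γ) + 1 / s := by
        gcongr; exact le_mul_of_one_le_right hs0.le hN

end Function

theorem stmt_14_general {Y : Type*} [MeasurableSpace Y] (R : Y → Y) (ν : Measure Y)
    [IsProbabilityMeasure ν]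
    (B : ℕ → Set Y) (hBpos : ∀ l, 0 < ν (B l))
    (hrec : ∀ l : ℕ, ∀ y : Y, ∃ n : ℕ, 1 ≤ n ∧ R^[n] y ∈ B l)
    (δ r : ℝ) (hδ1 : δ < 1) (hr : 0 < r)
    (phiB : ℕ → Y → ℕ) (hphiB : ∀ l y, phiB l y = sInf {n : ℕ | 1 ≤ n ∧ R^[n] y ∈ B l})
    (RB : ℕ → Y → Y) (hRB : ∀ l y, RB l y = R^[phiB l y] y)
    (y : Y) (Ly My : ℕ) (hMy : 1 ≤ My) (Ml : ℕ → ℕ) (Cl : ℕ → ℝ) (hCl : ∀ l, 0 < Cl l)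
    (hcount : ∀ l, Ly ≤ l → ∀ n : ℕ, My * Ml l ≤ n →
      |(∑ j ∈ Finset.Icc 1 n, Set.indicator (B l) (fun _ => (1 : ℝ)) (R^[j] y))
          - (n : ℝ) * (ν (B l)).toReal| ≤ Cl l * (n : ℝ) ^ (1 - (1 - δ) / (r + 1)))
    (N : ℕ → ℕ)
    (hN : ∀ l, N l = max (Ml l) (max ⌈1 / (2 * (ν (B l)).toReal)⌉₊
      (sInf {n : ℕ | 1 ≤ n ∧
        (n : ℝ) ^ (-(1 - δ) / (r + 1)) ≤ (ν (B l)).toReal / (2 * Cl l)}))) :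
    ∀ l, Ly ≤ l → ∀ s : ℝ, (My : ℝ) ≤ s →
      |((ν (B l)).toReal / (s * (N l : ℝ))) *
          (∑ j ∈ Finset.range ⌈s * (N l : ℝ)⌉₊, (phiB l ((RB l)^[j] y) : ℝ)) - 1|
        ≤ 3 * s ^ (-(1 - δ) / (r + 1)) + 2 / s := by
  obtain rfl : phiB = fun l => Function.firstReturnTime R (B l) := funext₂ hphiB
  obtain rfl : RB = fun l => Function.firstReturnMap R (B l) := funext₂ hRB
  intro l hl s hs
  simp only [neg_div] at hN ⊢
  set γ := (1 - δ) / (r + 1)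
  set μ := (ν (B l)).toReal
  have hγ : 0 < γ := div_pos (by linarith) (by linarith)
  have hμ : 0 < μ := ENNReal.toReal_pos (hBpos l).ne' (measure_ne_top ν _)
  have hC : 0 < Cl l := hCl l
  have hs1 : 1 ≤ s := le_trans (by exact_mod_cast hMy) hs
  obtain ⟨hN1, hNdecay⟩ := natCast_rpow_neg_le_of_sInf_le hγ (by positivity : 0 < μ / (2 * Cl l))
    (((le_max_right _ _).trans (le_max_right _ _)).trans (hN l).ge)
  have hCN : Cl l * (N l : ℝ) ^ (-γ) ≤ μ / 2 := by
    rw [le_div_iff₀ (by positivity)] at hNdecay; linarith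
  have hM : (My : ℝ) * Ml l ≤ s * N l :=
    mul_le_mul hs (by exact_mod_cast (le_max_left _ _).trans (hN l).ge) (by positivity)
      (by linarith)
  have hreturn := Function.abs_div_mul_sum_firstReturnTime_sub_one_le (hrec l) y hμ hC.le hγ.le hs1
    (by exact_mod_cast hN1) hCN hM fun n hn => hcount l hl n (by exact_mod_cast hn)
  have hs0 : 0 < s := by linarith
  have : 1 / s ≤ 2 / s := by gcongr; norm_num
  linarith [Real.rpow_nonneg hs0.le (-γ)]

/-- turning a quantitative counting estimate for visits to `B_l` into a
two-sided estimate for Birkhoff sums of the first return time to `B_l`. -/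
theorem stmt_14 {Y : Type*} [MeasurableSpace Y] (R : Y → Y) (ν : Measure Y)
    [IsProbabilityMeasure ν] (hR : MeasurePreserving R ν ν)
    (B : ℕ → Set Y) (hBmeas : ∀ l, MeasurableSet (B l)) (hBpos : ∀ l, 0 < ν (B l))
    (hrec : ∀ l : ℕ, ∀ y : Y, ∃ n : ℕ, 1 ≤ n ∧ R^[n] y ∈ B l)
    (δ r : ℝ) (hδ0 : 0 < δ) (hδ1 : δ < 1) (hr : 0 < r)
    (phiB : ℕ → Y → ℕ) (hphiB : ∀ l y, phiB l y = sInf {n : ℕ | 1 ≤ n ∧ R^[n] y ∈ B l})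
    (RB : ℕ → Y → Y) (hRB : ∀ l y, RB l y = R^[phiB l y] y)
    (y : Y) (Ly My : ℕ) (hMy : 1 ≤ My) (Ml : ℕ → ℕ) (Cl : ℕ → ℝ) (hCl : ∀ l, 0 < Cl l)
    (hcount : ∀ l, Ly ≤ l → ∀ n : ℕ, My * Ml l ≤ n →
      |(∑ j ∈ Finset.Icc 1 n, Set.indicator (B l) (fun _ => (1 : ℝ)) (R^[j] y))
          - (n : ℝ) * (ν (B l)).toReal| ≤ Cl l * (n : ℝ) ^ (1 - (1 - δ) / (r + 1)))
    (N : ℕ → ℕ)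
    (hN : ∀ l, N l = max (Ml l) (max ⌈1 / (2 * (ν (B l)).toReal)⌉₊
      (sInf {n : ℕ | 1 ≤ n ∧
        (n : ℝ) ^ (-(1 - δ) / (r + 1)) ≤ (ν (B l)).toReal / (2 * Cl l)}))) :
    ∀ l, Ly ≤ l → ∀ s : ℝ, (My : ℝ) ≤ s →
      |((ν (B l)).toReal / (s * (N l : ℝ))) *
          (∑ j ∈ Finset.range ⌈s * (N l : ℝ)⌉₊, (phiB l ((RB l)^[j] y) : ℝ)) - 1|
        ≤ 3 * s ^ (-(1 - δ) / (r + 1)) + 2 / s :=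
  stmt_14_general R ν B hBpos hrec δ r hδ1 hr phiB hphiB RB hRB y Ly My hMy Ml Cl hCl hcount N hN
end

section
/- Fix a compact metric space (M, d_M), a sequence of Lipschitz functions (ϑ_n) dense in C(M) normalized by their Lipschitz norms, and define the metric D_M(λ, λ') = ∑_{n≥1} 2^{-n}|∫ϑ_n dλ − ∫ϑ_n dλ'| on probability measures on M; D_M metrizes weak convergence. Let (X,μ,T) be probability preserving, α a sequence of naturals, (A_l) rare events (μ(A_l) → 0), and Φ a random process with values in [0,∞). Assume: for each δ > 0 there exist rare events A_l^{(δ)} ⊂ A_l with μ_{A_l}(A_l ∖ A_l^{(δ)}) < δ and μ(A_l^{(δ)})·Φ_{A_l^{(δ)},α} ⇒ Φ under μ as l → ∞. Then μ(A_l)·Φ_{A_l,α} ⇒ Φ under μ as l → ∞. -/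
/-!
Fix a test function `g`. As `[0,∞]^ℕ` is compact and the coordinates `s ↦ (1 + s)⁻¹` separate
its points, there is `η > 0` such that `g` oscillates by less than `ε` between sequences whose
compressed coordinates are all `η`-close. Take `A'` from the hypothesis for a small `δ` and
`N ≈ 2 / (η μ(A))`. Outside the set `B` of points that visit `A \ A'` at one of the times
`ᾱ⁽¹⁾, …, ᾱ⁽ᴺ⁾`, the return indices to `A` and to `A'` coincide as long as they are `≤ N`, and
all later ones are scaled beyond `2 / η` by `μ(A)` and by `μ(A') ≥ μ(A) / 2`; so the two
processes are coordinatewise `η`-close off `B`. Invariance of `μ` gives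
`μ(B) ≤ N μ(A \ A') ≤ δ (2 / η + 1)`, and the integrals of `g` along the two processes differ by
at most `2 ‖g‖ μ(B) + ε`.
-/

open MeasureTheory Filter Topology
open scoped ENNReal

/-- Successive delayed return indices along the delay sequence with partial sums `abar`:
`delayedReturn T A abar 0 x = 0` and `delayedReturn T A abar (i+1) x` is the least `m ≥ 1`
with `m > delayedReturn T A abar i x` and `T^[abar m] x ∈ A` (`⊤` if none exists). -/
noncomputable def delayedReturn {X : Type*} (T : X → X) (A : Set X) (abar : ℕ → ℕ) :
    ℕ → X → ℕ∞
  | 0, _ => 0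
  | i + 1, x => sInf {j : ℕ∞ | ∃ m : ℕ, j = (m : ℕ∞) ∧ 1 ≤ m ∧
      delayedReturn T A abar i x < (m : ℕ∞) ∧ T^[abar m] x ∈ A}

/-- Canonical embedding `ℕ∞ → [0,∞]`. -/
noncomputable def toE : ℕ∞ → ℝ≥0∞ := fun m => WithTop.map (Nat.cast : ℕ → NNReal) m

/-- The delayed return process `μ(A)·Φ_{A,α}` (scaled by `c`), as a map into `[0,∞]^ℕ`. -/
noncomputable def delayedProc {X : Type*} (T : X → X) (A : Set X) (abar : ℕ → ℕ)
    (c : ℝ≥0∞) (x : X) : ℕ → ℝ≥0∞ :=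
  fun i => c * toE (delayedReturn T A abar (i + 1) x)

open Set

theorem exists_pos_forall_dist_lt_of_separates {Y ι Z W : Type*} [TopologicalSpace Y]
    [CompactSpace Y] [MetricSpace Z] [PseudoMetricSpace W] {f : ι → Y → Z}
    (hf : ∀ i, Continuous (f i)) (hsep : ∀ y y', (∀ i, f i y = f i y') → y = y') {g : Y → W}
    (hg : Continuous g) {ε : ℝ} (hε : 0 < ε) :
    ∃ η > 0, ∀ y y', (∀ i, dist (f i y) (f i y') ≤ η) → dist (g y) (g y') < ε := by
  let near : ℕ → Set (Y × Y) := fun n => {p | ∀ i, dist (f i p.1) (f i p.2) ≤ 1 / (n + 1)}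
  let far : Set (Y × Y) := {p | ε ≤ dist (g p.1) (g p.2)}
  have hnear_closed (n : ℕ) : IsClosed (near n) := by
    simp only [near, ofPred_forall]
    exact isClosed_iInter fun i => isClosed_le
      (((hf i).comp continuous_fst).dist ((hf i).comp continuous_snd)) continuous_const
  have hnear_anti : Antitone near := antitone_nat_of_succ_le fun n p hp i =>
    (hp i).trans (by gcongr; linarith)
  have hfar_compact : IsCompact far :=
    (isClosed_le continuous_const
      ((hg.comp continuous_fst).dist (hg.comp continuous_snd))).isCompact
  have hfar_near : far ∩ ⋂ n, near n = ∅ := by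
    refine eq_empty_iff_forall_notMem.2 fun p ⟨hfar, hp⟩ => ?_
    have hp_eq : p.1 = p.2 := hsep _ _ fun i => dist_le_zero.1 <|
      ge_of_tendsto' tendsto_one_div_add_atTop_nhds_zero_nat fun n => mem_iInter.1 hp n i
    simp only [far, mem_ofPred_eq, hp_eq, dist_self] at hfar
    linarith
  obtain ⟨n, hn⟩ := hfar_compact.elim_directed_family_closed near hnear_closed hfar_near
    hnear_anti.directed_ge
  exact ⟨1 / (n + 1), by positivity, fun y y' hyy' =>
    not_le.1 fun hfar => (eq_empty_iff_forall_notMem.1 hn) (y, y') ⟨hfar, hyy'⟩⟩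

theorem dist_integral_le_of_forall_notMem {X E : Type*} [MeasurableSpace X] [NormedAddCommGroup E]
    [NormedSpace ℝ E] {μ : Measure X} [IsProbabilityMeasure μ] {F G : X → E}
    (hF : Integrable F μ) (hG : Integrable G μ) {B : Set X} (hB : MeasurableSet B) {C ε : ℝ}
    (hε : 0 ≤ ε) (hC : ∀ x, dist (F x) (G x) ≤ C) (hFG : ∀ x ∉ B, dist (F x) (G x) ≤ ε) :
    dist (∫ x, F x ∂μ) (∫ x, G x ∂μ) ≤ C * μ.real B + ε := by
  have hbound (x : X) : ‖F x - G x‖ ≤ B.indicator (fun _ => C) x + ε := by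
    rw [← dist_eq_norm]
    by_cases hx : x ∈ B
    · rw [indicator_of_mem hx]; linarith [hC x]
    · rw [indicator_of_notMem hx]; linarith [hFG x hx]
  calc dist (∫ x, F x ∂μ) (∫ x, G x ∂μ) = ‖∫ x, (F x - G x) ∂μ‖ := by
        rw [dist_eq_norm, integral_sub hF hG]
    _ ≤ ∫ x, ‖F x - G x‖ ∂μ := norm_integral_le_integral_norm _
    _ ≤ ∫ x, (B.indicator (fun _ => C) x + ε) ∂μ :=
        integral_mono (hF.sub hG).norm (((integrable_const C).indicator hB).add
          (integrable_const ε)) hbound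
    _ = C * μ.real B + ε := by
        rw [integral_add ((integrable_const C).indicator hB) (integrable_const ε),
          integral_indicator_const _ hB, integral_const, smul_eq_mul, smul_eq_mul, mul_comm,
          probReal_univ, one_mul]

theorem MeasureTheory.MeasurePreserving.measureReal_biUnion_preimage_iterate_le {X : Type*}
    [MeasurableSpace X] {μ : Measure X} {T : X → X} (hT : MeasurePreserving T μ μ) {D : Set X}
    (hD : MeasurableSet D) (s : Finset ℕ) (n : ℕ → ℕ) :
    μ.real (⋃ m ∈ s, T^[n m] ⁻¹' D) ≤ s.card * μ.real D :=
  calc μ.real (⋃ m ∈ s, T^[n m] ⁻¹' D) ≤ ∑ m ∈ s, μ.real (T^[n m] ⁻¹' D) :=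
        measureReal_biUnion_finset_le _ _
    _ = s.card * μ.real D := by
        rw [Finset.sum_congr rfl fun m _ => (hT.iterate (n m)).measureReal_preimage
          hD.nullMeasurableSet, Finset.sum_const, nsmul_eq_mul]

theorem exists_nat_mul_mem_Icc {p K : ℝ} (hp : 0 < p) (hp1 : p ≤ 1) (hK : 0 ≤ K) :
    ∃ N : ℕ, K ≤ p * N ∧ p * N ≤ K + 1 := by
  refine ⟨⌈K / p⌉₊, ?_, ?_⟩
  · rw [← div_le_iff₀' hp]
    exact Nat.le_ceil _
  · calc p * ⌈K / p⌉₊ ≤ p * (K / p + 1) := by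
          gcongr; exact (Nat.ceil_lt_add_one (div_nonneg hK hp.le)).le
      _ = K + p := by field_simp
      _ ≤ K + 1 := by linarith

theorem ENat.measurable_of_measurableSet_le {α : Type*} [MeasurableSpace α] {f : α → ℕ∞}
    (h : ∀ n : ℕ, MeasurableSet {x | f x ≤ n}) : Measurable f := by
  refine ENat.measurable_iff.2 fun n => ?_
  cases n with
  | zero => simpa [preimage, nonpos_iff_eq_zero] using h 0
  | succ n =>
    convert (h (n + 1)).diff (h n) using 1
    ext x
    simp only [mem_preimage, mem_singleton_iff, Set.mem_sdiff, mem_ofPred_eq, not_le]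
    rw [← ENat.add_one_le_iff (ENat.natCast_ne_top n)]
    push_cast
    exact le_antisymm_iff

noncomputable def invOneAdd (s : ℝ≥0∞) : ℝ := ((1 + s)⁻¹).toReal

theorem invOneAdd_nonneg (s : ℝ≥0∞) : 0 ≤ invOneAdd s := ENNReal.toReal_nonneg

theorem invOneAdd_ofReal {t : ℝ} (ht : 0 ≤ t) : invOneAdd (ENNReal.ofReal t) = (1 + t)⁻¹ := by
  rw [invOneAdd, ENNReal.toReal_inv, ENNReal.toReal_add ENNReal.one_ne_top ENNReal.ofReal_ne_top,
    ENNReal.toReal_one, ENNReal.toReal_ofReal ht]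

theorem invOneAdd_antitone : Antitone invOneAdd := fun _ _ hab =>
  ENNReal.toReal_mono (by simp) (ENNReal.inv_le_inv.2 (by gcongr))

theorem continuous_invOneAdd : Continuous invOneAdd :=
  ENNReal.continuousOn_toReal.comp_continuous (continuous_inv.comp (continuous_const_add 1))
    fun _ => by simp

theorem invOneAdd_injective : Function.Injective invOneAdd := fun a b h =>
  (ENNReal.add_right_inj ENNReal.one_ne_top).1 <|
    inv_injective <| (ENNReal.toReal_eq_toReal_iff' (by simp) (by simp)).1 h

theorem dist_invOneAdd_ofReal_le {a b : ℝ} (ha : 0 ≤ a) (hb : 0 ≤ b) :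
    dist (invOneAdd (ENNReal.ofReal a)) (invOneAdd (ENNReal.ofReal b)) ≤ dist a b := by
  rw [invOneAdd_ofReal ha, invOneAdd_ofReal hb, Real.dist_eq, Real.dist_eq,
    inv_sub_inv (by positivity) (by positivity), abs_div, add_sub_add_left_eq_sub, abs_sub_comm]
  exact div_le_self (abs_nonneg _) (by rw [abs_of_pos (by positivity)]; nlinarith)

theorem invOneAdd_le {η : ℝ} (hη : 0 < η) {s : ℝ≥0∞} (hs : ENNReal.ofReal (1 / η) ≤ s) :
    invOneAdd s ≤ η :=
  calc invOneAdd s ≤ invOneAdd (ENNReal.ofReal (1 / η)) := invOneAdd_antitone hs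
    _ = (1 + 1 / η)⁻¹ := invOneAdd_ofReal (by positivity)
    _ ≤ η := by
        rw [inv_le_comm₀ (by positivity) hη]
        simp

theorem dist_invOneAdd_mul_le {p p' δ η : ℝ} {N : ℕ} {r r' : ℕ∞} (hp' : 0 ≤ p') (hp'p : p' ≤ p)
    (hdiff : p - p' ≤ δ * p) (hδ : δ ≤ 1 / 2) (hη : 0 < η) (hlarge : 2 / η ≤ p * N)
    (hsmall : δ * (p * N) ≤ η) (hrr' : (r ≤ N ∧ r' = r) ∨ (N < r ∧ N < r')) :
    dist (invOneAdd (ENNReal.ofReal p * r)) (invOneAdd (ENNReal.ofReal p' * r')) ≤ η := by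
  have hp : 0 ≤ p := hp'.trans hp'p
  rcases hrr' with ⟨hr, rfl⟩ | ⟨hr, hr'⟩
  · lift r' to ℕ using ne_top_of_le_ne_top (ENat.natCast_ne_top N) hr
    have hrN : (r' : ℝ) ≤ N := by exact_mod_cast hr
    rw [ENat.toENNReal_coe, ← ENNReal.ofReal_natCast, ← ENNReal.ofReal_mul hp,
      ← ENNReal.ofReal_mul hp']
    calc _ ≤ dist (p * r') (p' * r') := dist_invOneAdd_ofReal_le (by positivity) (by positivity)
      _ = (p - p') * r' := by
          rw [Real.dist_eq, ← sub_mul, abs_of_nonneg (by nlinarith)]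
      _ ≤ δ * (p * N) := by
          rw [← mul_assoc]
          exact mul_le_mul hdiff hrN (by positivity) (by linarith)
      _ ≤ η := hsmall
  · have hsmall_of_large {q : ℝ} {s : ℕ∞} (hq : 0 ≤ q) (hqN : 1 / η ≤ q * N) (hs : N < s) :
        invOneAdd (ENNReal.ofReal q * s) ≤ η := by
      refine invOneAdd_le hη ?_
      calc ENNReal.ofReal (1 / η) ≤ ENNReal.ofReal q * N := by
            rw [← ENNReal.ofReal_natCast, ← ENNReal.ofReal_mul hq]
            exact ENNReal.ofReal_le_ofReal hqN
        _ ≤ ENNReal.ofReal q * s := by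
            gcongr
            exact_mod_cast ENat.toENNReal_le.2 hs.le
    have hhalf : p * N ≤ 2 * (p' * N) := by
      rw [← mul_assoc]
      exact mul_le_mul_of_nonneg_right (by nlinarith) (Nat.cast_nonneg N)
    have hinv : 2 * (1 / η) = 2 / η := by ring
    have h₁ := hsmall_of_large hp (by linarith [one_div_pos.2 hη]) hr
    have h₂ := hsmall_of_large hp' (by linarith) hr'
    rw [Real.dist_eq, abs_sub_le_iff]
    constructor <;> linarith [invOneAdd_nonneg (ENNReal.ofReal p * r),
      invOneAdd_nonneg (ENNReal.ofReal p' * r')]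

section DelayedReturn

variable {X : Type*} {T : X → X} {A A' : Set X} {abar : ℕ → ℕ} {x : X}

theorem delayedReturn_succ_le {i m : ℕ} (hm : 1 ≤ m) (hlt : delayedReturn T A abar i x < m)
    (hmem : T^[abar m] x ∈ A) : delayedReturn T A abar (i + 1) x ≤ m :=
  sInf_le ⟨m, rfl, hm, hlt, hmem⟩

theorem exists_delayedReturn_succ_eq {i N : ℕ} (h : delayedReturn T A abar (i + 1) x ≤ N) :
    ∃ m : ℕ, delayedReturn T A abar (i + 1) x = m ∧ 1 ≤ m ∧
      delayedReturn T A abar i x < m ∧ T^[abar m] x ∈ A := by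
  have hne : {j : ℕ∞ | ∃ m : ℕ, j = m ∧ 1 ≤ m ∧
      delayedReturn T A abar i x < m ∧ T^[abar m] x ∈ A}.Nonempty := by
    refine nonempty_iff_ne_empty.2 fun hempty => ?_
    rw [delayedReturn, hempty, sInf_empty] at h
    exact not_le.2 (ENat.natCast_lt_top N) h
  exact csInf_mem hne

theorem delayedReturn_succ_le_natCast_iff {i N : ℕ} :
    delayedReturn T A abar (i + 1) x ≤ N ↔
      ∃ m : ℕ, 1 ≤ m ∧ m ≤ N ∧ delayedReturn T A abar i x < m ∧ T^[abar m] x ∈ A := by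
  refine ⟨fun h => ?_, fun ⟨m, hm, hmN, hlt, hmem⟩ =>
    (delayedReturn_succ_le hm hlt hmem).trans (by exact_mod_cast hmN)⟩
  obtain ⟨m, hm_eq, hm, hlt, hmem⟩ := exists_delayedReturn_succ_eq h
  exact ⟨m, hm, by exact_mod_cast hm_eq ▸ h, hlt, hmem⟩

theorem delayedReturn_le_of_subset (hsub : A' ⊆ A) (i : ℕ) :
    delayedReturn T A abar i x ≤ delayedReturn T A' abar i x := by
  induction i with
  | zero => exact le_rfl
  | succ i ih =>
    refine le_sInf ?_
    rintro _ ⟨m, rfl, hm, hlt, hmem⟩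
    exact delayedReturn_succ_le hm (ih.trans_lt hlt) (hsub hmem)

theorem delayedReturn_eq_of_forall_mem {N : ℕ} (hsub : A' ⊆ A)
    (hvisit : ∀ m, 1 ≤ m → m ≤ N → T^[abar m] x ∈ A → T^[abar m] x ∈ A') {i : ℕ}
    (hi : delayedReturn T A abar i x ≤ N) :
    delayedReturn T A' abar i x = delayedReturn T A abar i x := by
  induction i with
  | zero => rfl
  | succ i ih =>
    obtain ⟨m, hm_eq, hm, hlt, hmem⟩ := exists_delayedReturn_succ_eq hi
    rw [hm_eq] at hi ⊢
    have hprev := ih (hlt.le.trans hi)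
    refine le_antisymm (delayedReturn_succ_le hm (hprev ▸ hlt) ?_) ?_
    · exact hvisit m hm (by exact_mod_cast hi) hmem
    · exact hm_eq ▸ delayedReturn_le_of_subset hsub _

variable [MeasurableSpace X]

theorem measurable_delayedReturn (hT : Measurable T) (hA : MeasurableSet A) (i : ℕ) :
    Measurable (delayedReturn T A abar i) := by
  induction i with
  | zero => exact measurable_const
  | succ i ih =>
    refine ENat.measurable_of_measurableSet_le fun N => ?_
    simp only [delayedReturn_succ_le_natCast_iff, ofPred_exists, ofPred_and]
    exact .iUnion fun m => (MeasurableSet.const _).inter <| (MeasurableSet.const _).inter <|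
      (ih (MeasurableSet.of_discrete (s := Iio (m : ℕ∞)))).inter (hT.iterate _ hA)

theorem measurable_delayedProc (hT : Measurable T) (hA : MeasurableSet A) (c : ℝ≥0∞) :
    Measurable (delayedProc T A abar c) :=
  measurable_pi_lambda _ fun i =>
    ((Measurable.of_discrete (f := toE)).comp (measurable_delayedReturn hT hA (i + 1))).const_mul c

end DelayedReturn

theorem dist_integral_delayedProc_le {X : Type*} [MeasurableSpace X] {μ : Measure X}
    [IsProbabilityMeasure μ] {T : X → X} (hT : MeasurePreserving T μ μ) (abar : ℕ → ℕ)
    {A A' : Set X} (hA : MeasurableSet A) (hA' : MeasurableSet A') (hsub : A' ⊆ A)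
    (hpos : 0 < μ A) {δ η ε : ℝ} (hδ0 : 0 ≤ δ) (hδ : δ ≤ 1 / 2) (hη : 0 < η) (hε : 0 ≤ ε)
    (hdiff : μ (A \ A') ≤ ENNReal.ofReal δ * μ A) (hδη : δ * (2 / η + 1) ≤ η)
    (g : BoundedContinuousFunction (ℕ → ℝ≥0∞) ℝ)
    (hg : ∀ ω ω', (∀ i, dist (invOneAdd (ω i)) (invOneAdd (ω' i)) ≤ η) → dist (g ω) (g ω') ≤ ε) :
    dist (∫ x, g (delayedProc T A abar (μ A) x) ∂μ) (∫ x, g (delayedProc T A' abar (μ A') x) ∂μ)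
      ≤ 2 * ‖g‖ * (δ * (2 / η + 1)) + ε := by
  have hdiff' : μ.real A - μ.real A' ≤ δ * μ.real A := by
    rw [← measureReal_sdiff hsub hA']
    simpa [Measure.real, ENNReal.toReal_mul, ENNReal.toReal_ofReal hδ0] using
      ENNReal.toReal_mono (by finiteness) hdiff
  have hpos' : 0 < μ.real A := ENNReal.toReal_pos hpos.ne' (measure_ne_top μ A)
  obtain ⟨N, hN_large, hN_small⟩ :=
    exists_nat_mul_mem_Icc hpos' measureReal_le_one (by positivity : 0 ≤ 2 / η)
  set B := ⋃ m ∈ Finset.Icc 1 N, T^[abar m] ⁻¹' (A \ A')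
  have hB : MeasurableSet B :=
    Finset.measurableSet_biUnion _ fun m _ => hT.measurable.iterate _ (hA.diff hA')
  have hμB : μ.real B ≤ δ * (2 / η + 1) :=
    calc μ.real B ≤ (Finset.Icc 1 N).card * μ.real (A \ A') :=
          hT.measureReal_biUnion_preimage_iterate_le (hA.diff hA') _ abar
      _ = N * μ.real (A \ A') := by rw [Nat.card_Icc, add_tsub_cancel_right]
      _ ≤ N * (δ * μ.real A) := by rw [measureReal_sdiff hsub hA']; gcongr
      _ = δ * (μ.real A * N) := by ring
      _ ≤ δ * (2 / η + 1) := by gcongr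
  have hgood (x : X) (hx : x ∉ B) (i : ℕ) : dist (invOneAdd (delayedProc T A abar (μ A) x i))
      (invOneAdd (delayedProc T A' abar (μ A') x i)) ≤ η := by
    have hvisit (m : ℕ) (hm : 1 ≤ m) (hmN : m ≤ N) (hmem : T^[abar m] x ∈ A) :
        T^[abar m] x ∈ A' :=
      by_contra fun hmem' => hx (mem_biUnion (Finset.mem_Icc.2 ⟨hm, hmN⟩) ⟨hmem, hmem'⟩)
    rw [delayedProc, delayedProc, ← ofReal_measureReal, ← ofReal_measureReal]
    refine dist_invOneAdd_mul_le measureReal_nonneg (measureReal_mono hsub) hdiff' hδ hη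
      hN_large (hδη.trans' (by gcongr)) ?_
    by_cases hr : delayedReturn T A abar (i + 1) x ≤ N
    · exact .inl ⟨hr, delayedReturn_eq_of_forall_mem hsub hvisit hr⟩
    · exact .inr ⟨not_le.1 hr, (not_le.1 hr).trans_le (delayedReturn_le_of_subset hsub _)⟩
  have hint {A : Set X} (hA : MeasurableSet A) (c : ℝ≥0∞) :
      Integrable (fun x => g (delayedProc T A abar c x)) μ :=
    .of_bound (g.continuous.measurable.comp (measurable_delayedProc hT.measurable hA c)
      |>.aestronglyMeasurable) ‖g‖ (.of_forall fun _ => g.norm_coe_le_norm _)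
  calc _ ≤ 2 * ‖g‖ * μ.real B + ε :=
        dist_integral_le_of_forall_notMem (hint hA _) (hint hA' _) hB hε
          (fun _ => g.dist_le_two_norm _ _) fun x hx => hg _ _ (hgood x hx)
    _ ≤ _ := by gcongr

theorem stmt_15_general {X : Type*} [MeasurableSpace X] (μ : Measure X) [IsProbabilityMeasure μ]
    (T : X → X) (hT : MeasurePreserving T μ μ)
    (abar : ℕ → ℕ)
    (A : ℕ → Set X) (hAmeas : ∀ l, MeasurableSet (A l))
    (hApos : ∀ l, 0 < μ (A l))
    (Φ : Measure (ℕ → ℝ≥0∞))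
    (happrox : ∀ δ : ℝ, 0 < δ → ∃ A' : ℕ → Set X,
      (∀ l, MeasurableSet (A' l)) ∧ (∀ l, A' l ⊆ A l) ∧ (∀ l, 0 < μ (A' l)) ∧
      (∀ l, μ (A l \ A' l) < ENNReal.ofReal δ * μ (A l)) ∧
      ∀ g : BoundedContinuousFunction (ℕ → ℝ≥0∞) ℝ,
        Tendsto (fun l => ∫ x, g (delayedProc T (A' l) abar (μ (A' l)) x) ∂μ) atTop
          (𝓝 (∫ ω, g ω ∂Φ))) :
    ∀ g : BoundedContinuousFunction (ℕ → ℝ≥0∞) ℝ,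
      Tendsto (fun l => ∫ x, g (delayedProc T (A l) abar (μ (A l)) x) ∂μ) atTop
        (𝓝 (∫ ω, g ω ∂Φ)) := by
  intro g
  refine Metric.tendsto_atTop.2 fun ε hε => ?_
  obtain ⟨η, hη, hg⟩ := exists_pos_forall_dist_lt_of_separates
    (fun i => continuous_invOneAdd.comp (continuous_apply i))
    (fun ω ω' h => funext fun i => invOneAdd_injective (h i)) g.continuous (ε := ε / 3)
    (by positivity)
  have hδ_small : ∀ᶠ δ in 𝓝[>] (0 : ℝ),
      δ ≤ 1 / 2 ∧ δ * (2 / η + 1) ≤ η ∧ 2 * ‖g‖ * (δ * (2 / η + 1)) < ε / 3 := by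
    have hlim : Tendsto (fun δ : ℝ => δ * (2 / η + 1)) (𝓝[>] 0) (𝓝 0) :=
      ((continuous_mul_const _).tendsto' 0 0 (zero_mul _)).mono_left nhdsWithin_le_nhds
    exact (eventually_le_nhds (by norm_num : (0 : ℝ) < 1 / 2)).filter_mono nhdsWithin_le_nhds
      |>.and <| (hlim.eventually (ge_mem_nhds hη)).and <|
        (hlim.const_mul (2 * ‖g‖)).eventually (gt_mem_nhds (by simpa using hε))
  obtain ⟨δ, ⟨hδ, hδη, hδε⟩, hδ0⟩ := (hδ_small.and self_mem_nhdsWithin).exists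
  obtain ⟨A', hA'meas, hA'sub, -, hA'diff, hA'lim⟩ := happrox δ hδ0
  obtain ⟨l₀, hl₀⟩ := Metric.tendsto_atTop.1 (hA'lim g) (ε / 3) (by positivity)
  refine ⟨l₀, fun l hl => ?_⟩
  have hcompare := dist_integral_delayedProc_le hT abar (hAmeas l) (hA'meas l) (hA'sub l)
    (hApos l) hδ0.le hδ hη (by positivity) (hA'diff l).le hδη g fun ω ω' h => (hg ω ω' h).le
  linarith [dist_triangle (∫ x, g (delayedProc T (A l) abar (μ (A l)) x) ∂μ)
    (∫ x, g (delayedProc T (A' l) abar (μ (A' l)) x) ∂μ) (∫ ω, g ω ∂Φ), hl₀ l hl]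

/-- robustness of delayed Poisson limits under inner approximation of the
rare events.  Convergence in distribution in `[0,∞]^ℕ` is expressed via bounded continuous
test functions; `Φ` is the law of the limiting process, supported on `[0,∞)^ℕ`. -/
theorem stmt_15 {X : Type*} [MeasurableSpace X] (μ : Measure X) [IsProbabilityMeasure μ]
    (T : X → X) (hT : MeasurePreserving T μ μ)
    (α abar : ℕ → ℕ) (habar : ∀ j, abar j = ∑ i ∈ Finset.Icc 1 j, α i)
    (A : ℕ → Set X) (hAmeas : ∀ l, MeasurableSet (A l))
    (hApos : ∀ l, 0 < μ (A l)) (hrare : Tendsto (fun l => μ (A l)) atTop (𝓝 0))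
    (Φ : Measure (ℕ → ℝ≥0∞)) [IsProbabilityMeasure Φ]
    (hΦfin : Φ {ω | ∃ i, ω i = ⊤} = 0)
    (happrox : ∀ δ : ℝ, 0 < δ → ∃ A' : ℕ → Set X,
      (∀ l, MeasurableSet (A' l)) ∧ (∀ l, A' l ⊆ A l) ∧ (∀ l, 0 < μ (A' l)) ∧
      (∀ l, μ (A l \ A' l) < ENNReal.ofReal δ * μ (A l)) ∧
      ∀ g : BoundedContinuousFunction (ℕ → ℝ≥0∞) ℝ,
        Tendsto (fun l => ∫ x, g (delayedProc T (A' l) abar (μ (A' l)) x) ∂μ) atTop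
          (𝓝 (∫ ω, g ω ∂Φ))) :
    ∀ g : BoundedContinuousFunction (ℕ → ℝ≥0∞) ℝ,
      Tendsto (fun l => ∫ x, g (delayedProc T (A l) abar (μ (A l)) x) ∂μ) atTop
        (𝓝 (∫ ω, g ω ∂Φ)) :=
  stmt_15_general μ T hT abar A hAmeas hApos Φ happrox
end
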